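/- arXiv:1208.3274 — 3 statements merged into one kernel-verified Lean document; each statement's English description precedes it below -/
import Mathlib

section
/- The only integer solutions (X, Y, Z) to the system X + Y + Z = 3 and X^3 + Y^3 + Z^3 = 3 are (1,1,1), (4,4,-5), (4,-5,4), and (-5,4,4). -/
theorem stmt0 (X Y Z : ℤ) :
    (X + Y + Z = 3 ∧ X^3 + Y^3 + Z^3 = 3) ↔
      (X, Y, Z) = (1, 1, 1) ∨ (X, Y, Z) = (4, 4, -5) ∨
      (X, Y, Z) = (4, -5, 4) ∨ (X, Y, Z) = (-5, 4, 4) := by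
  constructor
  · rintro ⟨h1, h2⟩
    have ex : 3 * ((3 - X) * (X^2 + X*Y + Y*Z + Z*X)) = 24 := by
      linear_combination (Z^2 - X*Z - Y*Z + 3*Z - 2*X^2 - X*Y + 3*X + Y^2 + 3*Y + 9) * h1 - h2
    have ey : 3 * ((3 - Y) * (Y^2 + X*Y + Y*Z + Z*X)) = 24 := by
      linear_combination (Z^2 - X*Z - Y*Z + 3*Z - 2*Y^2 - X*Y + 3*Y + X^2 + 3*X + 9) * h1 - h2
    have hx : (3 - X) ∣ 8 := ⟨X^2 + X*Y + Y*Z + Z*X, by linarith⟩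
    have hy : (3 - Y) ∣ 8 := ⟨Y^2 + X*Y + Y*Z + Z*X, by linarith⟩
    have bx1 : 3 - X ≤ 8 := Int.le_of_dvd (by norm_num) hx
    have bx2 : -(3 - X) ≤ 8 := Int.le_of_dvd (by norm_num) (neg_dvd.mpr hx)
    have by1 : 3 - Y ≤ 8 := Int.le_of_dvd (by norm_num) hy
    have by2 : -(3 - Y) ≤ 8 := Int.le_of_dvd (by norm_num) (neg_dvd.mpr hy)
    have hX1 : -5 ≤ X := by linarith
    have hX2 : X ≤ 11 := by linarith
    have hY1 : -5 ≤ Y := by linarith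
    have hY2 : Y ≤ 11 := by linarith
    have hZ : Z = 3 - X - Y := by omega
    subst hZ
    clear ex ey hx hy bx1 bx2 by1 by2 h1
    interval_cases X <;> interval_cases Y <;> revert h2 <;> decide
  · rintro (h | h | h | h) <;>
      simp only [Prod.mk.injEq] at h <;>
      obtain ⟨rfl, rfl, rfl⟩ := h <;> norm_num
end

section
/- If integers X, Y, Z satisfy X + Y + Z = 3, X^3 + Y^3 + Z^3 = 3, and Z < 0, then Z = -5 and X = Y = 4. -/
theorem stmt15 (X Y Z : ℤ) (h1 : X + Y + Z = 3) (h2 : X^3 + Y^3 + Z^3 = 3)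
    (h3 : Z < 0) : Z = -5 ∧ X = 4 ∧ Y = 4 := by
  have hz : Z = 3 - X - Y := by omega
  subst hz
  have h3k : 3 * ((3 - X) * (3 - Y) * (X + Y)) = 24 := by linear_combination -h2
  have key : (3 - X) * (3 - Y) * (X + Y) = 8 := by linarith [h3k]
  have hd : (X + Y) ∣ 8 := ⟨(3 - X) * (3 - Y), by linear_combination -key⟩
  have hle : X + Y ≤ 8 := Int.le_of_dvd (by norm_num) hd
  have hge : 4 ≤ X + Y := by omega
  have h5 : X + Y = 4 ∨ X + Y = 5 ∨ X + Y = 6 ∨ X + Y = 7 ∨ X + Y = 8 := by omega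
  rcases h5 with h | h | h | h | h
  · exfalso
    have hy : Y = 4 - X := by omega
    subst hy
    nlinarith [sq_nonneg (X - 2), key]
  · exfalso
    have hy : Y = 5 - X := by omega
    subst hy
    nlinarith [sq_nonneg (2 * X - 5), key]
  · exfalso
    have hy : Y = 6 - X := by omega
    subst hy
    nlinarith [sq_nonneg (X - 3), key]
  · exfalso
    have hy : Y = 7 - X := by omega
    subst hy
    nlinarith [sq_nonneg (2 * X - 7), key]
  · have hy : Y = 8 - X := by omega
    subst hy
    have h4' : 8 * (X - 4)^2 = 0 := by linear_combination -key
    have h4 : (X - 4)^2 = 0 := by linarith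
    have : X - 4 = 0 := by
      have := sq_eq_zero_iff.mp h4
      omega
    refine ⟨by omega, by omega, by omega⟩
end

section
/- The set of integer triples (X, Y, Z) with X + Y + Z = 3 and X^3 + Y^3 + Z^3 = 3 is finite and has exactly 4 elements. -/
lemma key : {p : ℤ × ℤ × ℤ | p.1 + p.2.1 + p.2.2 = 3 ∧ p.1^3 + p.2.1^3 + p.2.2^3 = 3} =
    ↑({((1:ℤ),(1:ℤ),(1:ℤ)), (4,4,-5), (4,-5,4), (-5,4,4)} : Finset (ℤ × ℤ × ℤ)) := by
  ext ⟨x, y, z⟩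
  simp only [Set.mem_setOf_eq, Finset.coe_insert, Set.mem_insert_iff, Finset.coe_singleton,
    Set.mem_singleton_iff, Prod.mk.injEq]
  constructor
  · rintro ⟨h1, h2⟩
    have hz : z = 3 - x - y := by linarith
    subst hz
    have hd : (x + y) ∣ 8 := ⟨x*y - 3*(x+y) + 9, by nlinarith [h2]⟩
    have hb1 : x + y ≤ 8 := Int.le_of_dvd (by norm_num) hd
    have hb2 : -8 ≤ x + y := by
      have := Int.le_of_dvd (show (0:ℤ) < 8 by norm_num) ((neg_dvd).mpr hd)
      linarith
    obtain ⟨k, hk⟩ := hd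
    have hs : x + y = -8 ∨ x + y = -4 ∨ x + y = -2 ∨ x + y = -1 ∨ x + y = 1 ∨
        x + y = 2 ∨ x + y = 4 ∨ x + y = 8 := by
      rcases (show x + y = -8 ∨ x + y = -7 ∨ x + y = -6 ∨ x + y = -5 ∨ x + y = -4 ∨
        x + y = -3 ∨ x + y = -2 ∨ x + y = -1 ∨ x + y = 0 ∨ x + y = 1 ∨ x + y = 2 ∨
        x + y = 3 ∨ x + y = 4 ∨ x + y = 5 ∨ x + y = 6 ∨ x + y = 7 ∨ x + y = 8 by omega) with
        h|h|h|h|h|h|h|h|h|h|h|h|h|h|h|h|h <;> rw [h] at hk <;> omega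
    rcases hs with h|h|h|h|h|h|h|h
    · -- x+y = -8 : x^2+8x-34 = 0, (x+4)^2 = 50, impossible
      exfalso
      have hy : y = -8 - x := by omega
      subst hy
      have h4 : (x + 4)^2 = 50 := by nlinarith [h2]
      have h5 : x ≤ 4 := by nlinarith
      have h6 : -12 ≤ x := by nlinarith
      interval_cases x <;> norm_num at h4
    · -- x+y = -4 : (x+2)^2 = 27, impossible
      exfalso
      have hy : y = -4 - x := by omega
      subst hy
      have h4 : (x + 2)^2 = 27 := by nlinarith [h2]
      have h5 : x ≤ 4 := by nlinarith
      have h6 : -8 ≤ x := by nlinarith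
      interval_cases x <;> norm_num at h4
    · -- x+y = -2 : (x+1)^2 = 20, impossible
      exfalso
      have hy : y = -2 - x := by omega
      subst hy
      have h4 : (x + 1)^2 = 20 := by nlinarith [h2]
      have h5 : x ≤ 4 := by nlinarith
      have h6 : -6 ≤ x := by nlinarith
      interval_cases x <;> norm_num at h4
    · -- x+y = -1 : (x-4)(x+5) = 0
      have hy : y = -1 - x := by omega
      subst hy
      have h4 : (x - 4) * (x + 5) = 0 := by nlinarith [h2]
      rcases mul_eq_zero.mp h4 with h5 | h5
      · right; right; left
        refine ⟨by omega, by omega, by omega⟩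
      · right; right; right
        refine ⟨by omega, by omega, by omega⟩
    · -- x+y = 1 : x^2-x+2 = 0, impossible
      exfalso
      have hy : y = 1 - x := by omega
      subst hy
      nlinarith [h2, sq_nonneg (2*x - 1)]
    · -- x+y = 2 : (x-1)^2 = 0
      left
      have hy : y = 2 - x := by omega
      subst hy
      have h4 : (x - 1)^2 = 0 := by nlinarith [h2]
      have h5 : x = 1 := by nlinarith [sq_nonneg (x-1)]
      refine ⟨h5, by omega, by omega⟩
    · -- x+y = 4 : (x-2)^2 + 1 = 0, impossible
      exfalso
      have hy : y = 4 - x := by omega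
      subst hy
      nlinarith [h2, sq_nonneg (x - 2)]
    · -- x+y = 8 : (x-4)^2 = 0
      right; left
      have hy : y = 8 - x := by omega
      subst hy
      have h4 : (x - 4)^2 = 0 := by nlinarith [h2]
      have h5 : x = 4 := by nlinarith [sq_nonneg (x-4)]
      refine ⟨h5, by omega, by omega⟩
  · rintro (⟨hx, hy, hz⟩ | ⟨hx, hy, hz⟩ | ⟨hx, hy, hz⟩ | ⟨hx, hy, hz⟩) <;> subst hx <;>
      subst hy <;> subst hz <;> norm_num

theorem stmt17 :
    {p : ℤ × ℤ × ℤ | p.1 + p.2.1 + p.2.2 = 3 ∧ p.1^3 + p.2.1^3 + p.2.2^3 = 3}.Finite ∧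
    Set.ncard {p : ℤ × ℤ × ℤ | p.1 + p.2.1 + p.2.2 = 3 ∧ p.1^3 + p.2.1^3 + p.2.2^3 = 3} = 4 := by
  rw [key]
  refine ⟨Finset.finite_toSet _, ?_⟩
  rw [Set.ncard_coe_finset]
  decide
end
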